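/- arXiv:math/0608448 — 2 statements merged into one kernel-verified Lean document; each statement's English description precedes it below -/
import Mathlib

section
/- An arrangement A is k-formal if and only if H_i(D_•) = 0 for every i = 1, …, k−1, where D_• is the complex with D_0 = V*, D_1 = E(A), d_1 = φ, and d_k = π_k : D_k(A) → D_{k-1}(A) for k ≥ 2. -/
open Module LinearMap Submodule

variable {K V ι : Type*} [Field K] [AddCommGroup V] [Module K V] [Fintype ι]

/-- The linear map `E(A) = ⊕_{H ∈ A} K·e_H → V*` sending `e_H` to the defining form `α_H`. -/
noncomputable def phiA (α : ι → Module.Dual K V) : (ι → K) →ₗ[K] Module.Dual K V :=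
  Fintype.linearCombination K α

/-- The intersection lattice `L(A)`: all intersections of subfamilies of the arrangement. -/
def arrL (α : ι → Module.Dual K V) : Set (Submodule K V) :=
  Set.range fun S : Finset ι => ⨅ i ∈ S, LinearMap.ker (α i)

/-- The rank of `X ∈ L(A)`: its codimension in `V`. -/
noncomputable def rkA (K : Type*) {V : Type*} [Field K] [AddCommGroup V] [Module K V]
    (X : Submodule K V) : ℕ :=
  Module.finrank K V - Module.finrank K ↥X

/-- The flat determined by a subset `S` of the arrangement. -/
def flatA (α : ι → Module.Dual K V) (S : Finset ι) : Submodule K V :=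
  ⨅ i ∈ S, LinearMap.ker (α i)

/-- `S` is closed: it contains every hyperplane containing its flat.  Closed subsets
are in bijection with the elements of the intersection lattice `L(A)`, via `S = A_X`. -/
def IsFlatA (α : ι → Module.Dual K V) (S : Finset ι) : Prop :=
  ∀ i, flatA α S ≤ LinearMap.ker (α i) → i ∈ S

/-- Index type for the elements `X ∈ L(A)` with `r(X) = k`, encoded as the closed
subsets `A_X ⊆ A` whose flat has rank `k`. -/
def IdxA (α : ι → Module.Dual K V) (k : ℕ) :=
  {S : Finset ι // IsFlatA α S ∧ rkA K (flatA α S) = k}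

instance (α : ι → Module.Dual K V) (k : ℕ) : Finite (IdxA α k) := Subtype.finite

noncomputable instance (α : ι → Module.Dual K V) (k : ℕ) : Fintype (IdxA α k) :=
  Fintype.ofFinite _

/-- Ambient spaces: `AmbA α m` contains `D_{m+1}(A_X)` and `R_{m+2}(A_X)` for every `X`.
`AmbA α 0 = E(A) = ι → K`, and `AmbA α (m+1) = ⊕_{X ∈ L, r(X) = m+2} (AmbA α m)`. -/
def AmbA (α : ι → Module.Dual K V) : ℕ → Type _
  | 0 => ι → K
  | (m+1) => IdxA α (m+2) → AmbA α m

instance ambACG (α : ι → Module.Dual K V) : ∀ m, AddCommGroup (AmbA α m)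
  | 0 => inferInstanceAs (AddCommGroup (ι → K))
  | (m+1) =>
    letI := ambACG α m
    inferInstanceAs (AddCommGroup (IdxA α (m+2) → AmbA α m))

instance ambMod (α : ι → Module.Dual K V) : ∀ m, Module K (AmbA α m)
  | 0 => inferInstanceAs (Module K (ι → K))
  | (m+1) =>
    letI := ambACG α m
    letI := ambMod α m
    inferInstanceAs (Module K (IdxA α (m+2) → AmbA α m))

/-- The differential `d_{m+2} = π_{m+2} : D_{m+2} → D_{m+1}` (as a map of ambient spaces):
the sum of the coordinate inclusions. -/
noncomputable def dA (α : ι → Module.Dual K V) (m : ℕ) : AmbA α (m+1) →ₗ[K] AmbA α m :=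
  ∑ Y : IdxA α (m+2), LinearMap.proj Y

/-- `RelA α m X` is the relation space `R_{m+2}(A_X) `, realized inside the ambient
space `AmbA α m`.  `RelA α 0 X = F(A_X)` consists of the relations supported on `A_X`;
and `RelA α (m+1) X = R_{m+3}(A_X)` is the kernel of `π_{m+2} : D_{m+2}(A_X) → R_{m+2}(A_X)`,
where `D_{m+2}(A_X) = ⊕_{Y ∈ L(A_X), r(Y)=m+2} R_{m+2}(A_Y)`. -/
noncomputable def RelA (α : ι → Module.Dual K V) : (m : ℕ) → Submodule K V → Submodule K (AmbA α m)
  | 0, X =>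
      LinearMap.ker (phiA α) ⊓
        ⨅ (i : ι) (_ : ¬ X ≤ LinearMap.ker (α i)), LinearMap.ker (LinearMap.proj (R := K) i)
  | (m+1), X =>
      (⨅ Y : IdxA α (m+2), Submodule.comap (LinearMap.proj Y) (RelA α m (flatA α Y.1))) ⊓
      (⨅ (Y : IdxA α (m+2)) (_ : ¬ X ≤ flatA α Y.1), LinearMap.ker (LinearMap.proj (R := K) Y)) ⊓
      LinearMap.ker (dA α m)

/-- `DA α m X` is the space `D_{m+2}(A_X) = ⊕_{Y ∈ L(A_X), r(Y)=m+2} R_{m+2}(A_Y)`,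
realized inside the ambient space `AmbA α (m+1)`. -/
noncomputable def DA (α : ι → Module.Dual K V) (m : ℕ) (X : Submodule K V) :
    Submodule K (AmbA α (m+1)) :=
  (⨅ Y : IdxA α (m+2), Submodule.comap (LinearMap.proj Y) (RelA α m (flatA α Y.1))) ⊓
  (⨅ (Y : IdxA α (m+2)) (_ : ¬ X ≤ flatA α Y.1), LinearMap.ker (LinearMap.proj (R := K) Y))
/-- `F_2(A)`: the subspace of the relation space `F(A)` spanned by the relations
supported on exactly three hyperplanes. -/
noncomputable def F2A (α : ι → Module.Dual K V) : Submodule K (ι → K) :=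
  Submodule.span K {c | c ∈ LinearMap.ker (phiA α) ∧ {i | c i ≠ 0}.ncard = 3}

/-- `k`-formality of the arrangement.  `A` is `2`-formal (formal) iff `F(A) = F_2(A)`;
for `k ≥ 3`, `A` is `k`-formal iff it is `(k-1)`-formal and
`π_k : D_k(A) → R_k(A)` is surjective. -/
def kFormalA (α : ι → Module.Dual K V) : ℕ → Prop
  | 0 => True
  | 1 => True
  | 2 => LinearMap.ker (phiA α) = F2A α
  | (k+3) => kFormalA α (k+2) ∧ RelA α (k+1) ⊥ ≤ Submodule.map (dA α (k+1)) (DA α (k+1) ⊥)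

/-- Vanishing of the homology `H_i(D_•) = ker d_i / im d_{i+1}` of the complex
`D_• : ⋯ → D_2 → D_1 = E(A) → D_0 = V* → 0`. -/
def HzeroA (α : ι → Module.Dual K V) : ℕ → Prop
  | 0 => True
  | 1 => LinearMap.ker (phiA α) ≤ Submodule.map (dA α 0) (DA α 0 ⊥)
  | (m+2) => DA α m ⊥ ⊓ LinearMap.ker (dA α m) ≤ Submodule.map (dA α (m+1)) (DA α (m+1) ⊥)

/-! By construction `R_{m+3}(A) = D_{m+2}(A) ∩ ker π_{m+2}`, so for `k ≥ 3`, `k`-formality adds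
to `(k-1)`-formality exactly the vanishing of `H_{k-1}`, and everything reduces to `k = 2`:
`F(A) = F_2(A)` iff `F(A) = im π_2`, where `im π_2` is the sum of the `F(A_X)` over rank-two
flats `X`. A three-term relation lies in `F(A_X)` for the flat `X` cut out by two of its forms.
Conversely, if `α_i, α_j` span the two-dimensional annihilator of `X`, every other `α_l` in it
gives a three-term relation involving `e_l`; subtracting these reduces a relation in `F(A_X)`
to one supported on `{i, j}`, which vanishes. -/

theorem phiA_single [DecidableEq ι] (α : ι → Module.Dual K V) (i : ι) (a : K) :
    phiA α (Pi.single i a) = a • α i :=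
  Fintype.linearCombination_apply_single K α i a

theorem phiA_eq_sum_of_support_subset (α : ι → Module.Dual K V) {c : ι → K} {T : Finset ι}
    (hT : ∀ t, c t ≠ 0 → t ∈ T) : phiA α c = ∑ t ∈ T, c t • α t := by
  rw [phiA, Fintype.linearCombination_apply]
  exact (Finset.sum_subset T.subset_univ fun t _ ht => by
    rw [not_imp_comm.mp (hT t) ht, zero_smul]).symm

theorem F2A_le_ker_phiA (α : ι → Module.Dual K V) : F2A α ≤ ker (phiA α) :=
  span_le.mpr fun _ hc => hc.1

theorem rkA_eq_finrank_dualAnnihilator [FiniteDimensional K V] (X : Submodule K V) :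
    rkA K X = finrank K X.dualAnnihilator := by
  have := Subspace.finrank_add_finrank_dualAnnihilator_eq X
  rw [rkA]
  omega

theorem rkA_dualCoannihilator [FiniteDimensional K V] (W : Submodule K (Module.Dual K V)) :
    rkA K W.dualCoannihilator = finrank K W := by
  have := Subspace.finrank_add_finrank_dualCoannihilator_eq W
  rw [rkA]
  omega

omit [Fintype ι] in
theorem flatA_eq_dualCoannihilator (α : ι → Module.Dual K V) (T : Finset ι) :
    flatA α T = (span K (α '' T)).dualCoannihilator := by
  refine SetLike.ext' ?_
  rw [coe_dualCoannihilator_span]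
  ext v
  simp [flatA]

omit [Fintype ι] in
theorem flatA_le_ker_of_mem_span (α : ι → Module.Dual K V) (T : Finset ι) {t : ι}
    (ht : α t ∈ span K (α '' T)) : flatA α T ≤ ker (α t) := by
  rw [flatA_eq_dualCoannihilator]
  exact fun v hv => (mem_dualCoannihilator v).mp hv _ ht

open Classical in
/-- The closed subset `A_X` for `X = flatA α T`. -/
noncomputable def closureA (α : ι → Module.Dual K V) (T : Finset ι) : Finset ι :=
  Finset.univ.filter fun t => flatA α T ≤ ker (α t)

theorem mem_closureA (α : ι → Module.Dual K V) (T : Finset ι) (t : ι) :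
    t ∈ closureA α T ↔ flatA α T ≤ ker (α t) := by
  simp [closureA]

theorem flatA_closureA (α : ι → Module.Dual K V) (T : Finset ι) :
    flatA α (closureA α T) = flatA α T := by
  refine le_antisymm (le_iInf₂ fun t ht => ?_) (le_iInf₂ fun t ht => (mem_closureA α T t).mp ht)
  exact iInf₂_le (f := fun i (_ : i ∈ closureA α T) => ker (α i)) t
    ((mem_closureA α T t).mpr (iInf₂_le t ht))

theorem isFlatA_closureA (α : ι → Module.Dual K V) (T : Finset ι) :
    IsFlatA α (closureA α T) := fun t ht =>
  (mem_closureA α T t).mpr (flatA_closureA α T ▸ ht)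

theorem mem_RelA_zero (α : ι → Module.Dual K V) (X : Submodule K V) (c : ι → K) :
    c ∈ RelA α 0 X ↔ phiA α c = 0 ∧ ∀ t, c t ≠ 0 → X ≤ ker (α t) := by
  change c ∈ ker (phiA α) ⊓ ⨅ (i : ι) (_ : ¬ X ≤ ker (α i)),
    ker (proj (R := K) (φ := fun _ : ι => K) i) ↔ _
  simp only [mem_inf, mem_iInf, mem_ker, proj_apply]
  exact and_congr_right fun _ => forall_congr' fun t => not_imp_comm

theorem dA_apply (α : ι → Module.Dual K V) (m : ℕ) (x : AmbA α (m+1)) :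
    dA α m x = ∑ Y : IdxA α (m+2), x Y :=
  LinearMap.sum_apply Finset.univ
    (fun Y : IdxA α (m+2) => (proj Y : (IdxA α (m+2) → AmbA α m) →ₗ[K] AmbA α m)) x

theorem dA_single (α : ι → Module.Dual K V) (m : ℕ) [DecidableEq (IdxA α (m+2))]
    (Y : IdxA α (m+2)) (c : AmbA α m) : dA α m (Pi.single Y c) = c :=
  (dA_apply α m _).trans (Fintype.sum_pi_single' Y c)

theorem mem_DA_bot (α : ι → Module.Dual K V) (m : ℕ) (x : AmbA α (m+1)) :
    x ∈ DA α m ⊥ ↔ ∀ Y : IdxA α (m+2), x Y ∈ RelA α m (flatA α Y.1) := by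
  simp only [DA, bot_le, not_true_eq_false, not_false_eq_true, iInf_neg, iInf_top, le_top,
    inf_of_le_left, mem_iInf]
  rfl

theorem single_mem_DA_bot (α : ι → Module.Dual K V) (m : ℕ) [DecidableEq (IdxA α (m+2))]
    (Y : IdxA α (m+2)) (c : AmbA α m) :
    Pi.single Y c ∈ DA α m ⊥ ↔ c ∈ RelA α m (flatA α Y.1) := by
  refine (mem_DA_bot α m _).trans ⟨fun h => by simpa using h Y, fun hc Z => ?_⟩
  rcases eq_or_ne Z Y with rfl | hZ
  · rwa [Pi.single_eq_same]
  · rw [Pi.single_eq_of_ne hZ]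
    exact zero_mem _

theorem kFormalA_succ_iff (α : ι → Module.Dual K V) (m : ℕ) :
    kFormalA α (m + 3) ↔ kFormalA α (m + 2) ∧ HzeroA α (m + 2) :=
  Iff.rfl

omit [Fintype ι] in
theorem linearIndependent_pair_of_ne {α : ι → Module.Dual K V} (hne : ∀ i, α i ≠ 0)
    (hinj : Function.Injective fun i => ker (α i)) {i j : ι} (hij : i ≠ j) :
    LinearIndependent K ![α i, α j] := by
  refine (LinearIndependent.pair_iff' (hne i)).mpr fun a ha => hij (hinj ?_)
  have ha0 : a ≠ 0 := by
    rintro rfl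
    exact hne j (by simpa using ha.symm)
  simp only [← ha, ker_smul _ a ha0]

omit [Fintype ι] in
theorem finrank_span_pair_of_ne {α : ι → Module.Dual K V} (hne : ∀ i, α i ≠ 0)
    (hinj : Function.Injective fun i => ker (α i)) {i j : ι} (hij : i ≠ j) :
    finrank K (span K {α i, α j}) = 2 := by
  rw [← Matrix.range_cons_cons_empty (α i) (α j) ![],
    finrank_span_eq_card (linearIndependent_pair_of_ne hne hinj hij), Fintype.card_fin]

theorem eq_zero_of_support_subset_pair {α : ι → Module.Dual K V} (hne : ∀ i, α i ≠ 0)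
    (hinj : Function.Injective fun i => ker (α i)) {c : ι → K} (hc : phiA α c = 0) {i j : ι}
    (hsupp : ∀ t, c t ≠ 0 → t = i ∨ t = j) : c = 0 := by
  classical
  have hsupp' : ∀ t, c t ≠ 0 → t ∈ ({i, j} : Finset ι) := by simpa using hsupp
  rw [phiA_eq_sum_of_support_subset α hsupp'] at hc
  have hij : c i = 0 ∧ c j = 0 := by
    rcases eq_or_ne i j with rfl | hij
    · simp only [Finset.pair_eq_singleton, Finset.sum_singleton, smul_eq_zero, hne, or_false] at hc
      exact ⟨hc, hc⟩
    · rw [Finset.sum_pair hij] at hc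
      exact LinearIndependent.pair_iff.mp (linearIndependent_pair_of_ne hne hinj hij) _ _ hc
  funext t
  by_contra ht
  rcases hsupp t ht with rfl | rfl
  exacts [ht hij.1, ht hij.2]

theorem exists_three_term_relation {α : ι → Module.Dual K V} (hne : ∀ i, α i ≠ 0)
    (hinj : Function.Injective fun i => ker (α i)) {i j l : ι} (hij : i ≠ j) (hli : l ≠ i)
    (hlj : l ≠ j) (hl : α l ∈ span K {α i, α j}) :
    ∃ r ∈ F2A α, r l = 1 ∧ ∀ t, r t ≠ 0 → t = i ∨ t = j ∨ t = l := by
  classical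
  obtain ⟨a, b, hab⟩ := mem_span_pair.mp hl
  have ha : a ≠ 0 := by
    rintro rfl
    rw [zero_smul, zero_add] at hab
    exact (LinearIndependent.pair_iff' (hne j)).mp
      (linearIndependent_pair_of_ne hne hinj hlj.symm) b hab
  have hb : b ≠ 0 := by
    rintro rfl
    rw [zero_smul, add_zero] at hab
    exact (LinearIndependent.pair_iff' (hne i)).mp
      (linearIndependent_pair_of_ne hne hinj hli.symm) a hab
  set r : ι → K := Pi.single l 1 - Pi.single i a - Pi.single j b with hr
  have hsupp : {t | r t ≠ 0} = {i, j, l} := by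
    ext t
    by_cases hti : t = i
    · subst hti; simp [hr, hij, hli.symm, ha]
    by_cases htj : t = j
    · subst htj; simp [hr, hij.symm, hlj.symm, hb]
    by_cases htl : t = l
    · subst htl; simp [hr, hli, hlj]
    simp [hr, hti, htj, htl]
  have hrel : phiA α r = 0 := by
    rw [hr, map_sub, map_sub, phiA_single, phiA_single, phiA_single, one_smul, ← hab]
    abel
  refine ⟨r, subset_span ⟨hrel, ?_⟩, by simp [hr, hli, hlj], fun t ht => ?_⟩
  · rw [hsupp]
    exact Set.ncard_eq_three.mpr ⟨i, j, l, hij, hli.symm, hlj.symm, rfl⟩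
  · simpa [hsupp] using (show t ∈ {t | r t ≠ 0} from ht)

theorem mem_F2A_of_forall_mem_span_pair {α : ι → Module.Dual K V} (hne : ∀ i, α i ≠ 0)
    (hinj : Function.Injective fun i => ker (α i)) {i j : ι} (hij : i ≠ j) {c : ι → K}
    (hc : phiA α c = 0) (hspan : ∀ t, c t ≠ 0 → α t ∈ span K {α i, α j}) : c ∈ F2A α := by
  classical
  suffices H : ∀ T : Finset ι, ∀ c : ι → K, phiA α c = 0 →
      (∀ t, c t ≠ 0 → α t ∈ span K {α i, α j}) → (∀ t, c t ≠ 0 → t = i ∨ t = j ∨ t ∈ T) →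
      c ∈ F2A α from
    H Finset.univ c hc hspan fun t _ => Or.inr (Or.inr (Finset.mem_univ t))
  intro T
  induction T using Finset.induction_on with
  | empty =>
    intro c hc _ hsupp
    rw [eq_zero_of_support_subset_pair hne hinj hc (i := i) (j := j) (by simpa using hsupp)]
    exact zero_mem _
  | insert l T _ IH =>
    intro c hc hspan hsupp
    by_cases hl : c l = 0 ∨ l = i ∨ l = j
    · refine IH c hc hspan fun t ht => ?_
      rcases hsupp t ht with h | h | h
      · exact Or.inl h
      · exact Or.inr (Or.inl h)
      rcases Finset.mem_insert.mp h with rfl | h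
      · exact (hl.resolve_left ht).imp id Or.inl
      · exact Or.inr (Or.inr h)
    push Not at hl
    obtain ⟨hcl, hli, hlj⟩ := hl
    obtain ⟨r, hrF2, hrl, hrsupp⟩ :=
      exists_three_term_relation hne hinj hij hli hlj (hspan l hcl)
    set c' := c - c l • r with hc'
    have hc'supp : ∀ t, c' t ≠ 0 → t ≠ l ∧ (c t ≠ 0 ∨ t = i ∨ t = j) := by
      intro t ht
      refine ⟨by rintro rfl; simp [hc', hrl] at ht, ?_⟩
      by_contra! h
      have hrt : r t = 0 := by
        by_contra hrt
        rcases hrsupp t hrt with rfl | rfl | rfl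
        exacts [h.2.1 rfl, h.2.2 rfl, by simp [hc', hrl] at ht]
      simp [hc', h.1, hrt] at ht
    have hc'F2 : c' ∈ F2A α := by
      refine IH c' ?_ (fun t ht => ?_) (fun t ht => ?_)
      · rw [hc', map_sub, map_smul, hc, F2A_le_ker_phiA α hrF2, smul_zero, sub_zero]
      · rcases (hc'supp t ht).2 with h | rfl | rfl
        · exact hspan t h
        · exact subset_span (by simp)
        · exact subset_span (by simp)
      · obtain ⟨htl, h | h⟩ := hc'supp t ht
        · rcases hsupp t h with h | h | h
          · exact Or.inl h
          · exact Or.inr (Or.inl h)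
          · exact Or.inr (Or.inr ((Finset.mem_insert.mp h).resolve_left htl))
        · exact h.imp id Or.inl
    simpa [hc'] using add_mem hc'F2 (smul_mem _ (c l) hrF2)

theorem RelA_zero_le_F2A [FiniteDimensional K V] {α : ι → Module.Dual K V}
    (hne : ∀ i, α i ≠ 0) (hinj : Function.Injective fun i => ker (α i))
    {X : Submodule K V} (hX : rkA K X = 2) : RelA α 0 X ≤ F2A α := by
  intro c hc
  obtain ⟨hphi, hsupp⟩ := (mem_RelA_zero α X c).mp hc
  by_cases h : ∃ i j, i ≠ j ∧ c i ≠ 0 ∧ c j ≠ 0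
  · obtain ⟨i, j, hij, hi, hj⟩ := h
    have hann : ∀ t, c t ≠ 0 → α t ∈ X.dualAnnihilator := fun t ht =>
      (mem_dualAnnihilator _).mpr fun v hv => hsupp t ht hv
    have hspan : span K {α i, α j} = X.dualAnnihilator := by
      refine eq_of_le_of_finrank_le ?_ ?_
      · rw [span_le]
        rintro _ (rfl | rfl)
        exacts [hann i hi, hann j hj]
      · rw [← rkA_eq_finrank_dualAnnihilator, hX, finrank_span_pair_of_ne hne hinj hij]
    exact mem_F2A_of_forall_mem_span_pair hne hinj hij hphi fun t ht => hspan ▸ hann t ht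
  · push Not at h
    rcases eq_or_ne c 0 with rfl | hc0
    · exact zero_mem _
    obtain ⟨i, hi⟩ := Function.ne_iff.mp hc0
    exact absurd (eq_zero_of_support_subset_pair hne hinj hphi (i := i) (j := i)
      fun t ht => Or.inl (by_contra fun hti => hi (h t i hti ht))) hc0

theorem mem_map_dA_of_forall_mem_span [FiniteDimensional K V] {α : ι → Module.Dual K V}
    {T : Finset ι} (hT : finrank K (span K (α '' T)) = 2) {c : ι → K} (hc : phiA α c = 0)
    (hspan : ∀ t, c t ≠ 0 → α t ∈ span K (α '' T)) : c ∈ map (dA α 0) (DA α 0 ⊥) := by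
  classical
  have hrk : rkA K (flatA α (closureA α T)) = 2 := by
    rw [flatA_closureA, flatA_eq_dualCoannihilator, rkA_dualCoannihilator, hT]
  let Y : IdxA α 2 := ⟨closureA α T, isFlatA_closureA α T, hrk⟩
  refine ⟨Pi.single Y c, (single_mem_DA_bot α 0 Y c).mpr ?_, dA_single α 0 Y c⟩
  refine (mem_RelA_zero α _ c).mpr ⟨hc, fun t ht => ?_⟩
  rw [flatA_closureA]
  exact flatA_le_ker_of_mem_span α T (hspan t ht)

theorem F2A_le_map_dA [FiniteDimensional K V] {α : ι → Module.Dual K V} (hne : ∀ i, α i ≠ 0)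
    (hinj : Function.Injective fun i => ker (α i)) : F2A α ≤ map (dA α 0) (DA α 0 ⊥) := by
  classical
  refine span_le.mpr ?_
  rintro c ⟨hc, hc3⟩
  obtain ⟨i, j, l, hij, hil, hjl, hsupp⟩ := Set.ncard_eq_three.mp hc3
  have hmem : ∀ t, c t ≠ 0 ↔ t = i ∨ t = j ∨ t = l := fun t => by
    simpa using Set.ext_iff.mp hsupp t
  have hrel : c l • α l = -(c i • α i + c j • α j) := by
    refine eq_neg_of_add_eq_zero_right ?_
    have hsupp' : ∀ t, c t ≠ 0 → t ∈ ({i, j, l} : Finset ι) := fun t ht => by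
      simpa using (hmem t).mp ht
    rw [← mem_ker.mp hc, phiA_eq_sum_of_support_subset α hsupp',
      Finset.sum_insert (by simp [hij, hil]), Finset.sum_pair hjl, add_assoc]
  have hl : α l ∈ span K {α i, α j} := by
    rw [← smul_mem_iff _ ((hmem l).mpr (by simp)), hrel]
    exact neg_mem (add_mem (smul_mem _ _ (subset_span (by simp)))
      (smul_mem _ _ (subset_span (by simp))))
  have hT : α '' ↑({i, j} : Finset ι) = {α i, α j} := by simp [Set.image_pair]
  refine mem_map_dA_of_forall_mem_span (T := {i, j})
    (by rw [hT, finrank_span_pair_of_ne hne hinj hij]) (mem_ker.mp hc) fun t ht => ?_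
  rw [hT]
  rcases (hmem t).mp ht with rfl | rfl | rfl
  exacts [subset_span (by simp), subset_span (by simp), hl]

theorem map_dA_le_F2A [FiniteDimensional K V] {α : ι → Module.Dual K V} (hne : ∀ i, α i ≠ 0)
    (hinj : Function.Injective fun i => ker (α i)) : map (dA α 0) (DA α 0 ⊥) ≤ F2A α := by
  rintro _ ⟨x, hx, rfl⟩
  rw [dA_apply]
  exact sum_mem fun Y _ => RelA_zero_le_F2A hne hinj Y.2.2 ((mem_DA_bot α 0 x).mp hx Y)

theorem kFormalA_two_iff [FiniteDimensional K V] {α : ι → Module.Dual K V}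
    (hne : ∀ i, α i ≠ 0) (hinj : Function.Injective fun i => ker (α i)) :
    kFormalA α 2 ↔ HzeroA α 1 :=
  ⟨fun h => h.le.trans (F2A_le_map_dA hne hinj),
    fun h => le_antisymm (h.trans (map_dA_le_F2A hne hinj)) (F2A_le_ker_phiA α)⟩

/-- An arrangement `A` is `k`-formal if and only if `H_i(D_•) = 0` for
every `i = 1, …, k-1`, where `D_•` is the complex with `D_0 = V*`, `D_1 = E(A)`,
`d_1 = φ` and `d_k = π_k` for `k ≥ 2`. -/
theorem kformal_iff_homology_vanishes
    {K V ι : Type*} [Field K] [AddCommGroup V] [Module K V] [FiniteDimensional K V]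
    [Fintype ι] (α : ι → Module.Dual K V)
    (hne : ∀ i, α i ≠ 0)
    (hinj : Function.Injective fun i => LinearMap.ker (α i))
    (k : ℕ) (hk : 2 ≤ k) :
    kFormalA α k ↔ ∀ i, 1 ≤ i → i ≤ k - 1 → HzeroA α i := by
  induction k, hk using Nat.le_induction with
  | base =>
    rw [kFormalA_two_iff hne hinj]
    exact ⟨fun h i h1 h2 => (show i = 1 by omega) ▸ h, fun h => h 1 le_rfl le_rfl⟩
  | succ k hk IH =>
    obtain ⟨m, rfl⟩ := Nat.exists_eq_add_of_le' hk
    rw [show m + 2 + 1 = m + 3 from rfl, kFormalA_succ_iff, IH]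
    constructor
    · rintro ⟨hlow, htop⟩ i h1 h2
      rcases (by omega : i ≤ m + 1 ∨ i = m + 2) with h | rfl
      exacts [hlow i h1 h, htop]
    · exact fun h => ⟨fun i h1 h2 => h i h1 (by omega), h (m + 2) (by omega) (by omega)⟩
end

section
/- Let l ≥ 3 and let G be a simple graph on vertex set {1,…,n} whose edge forms {x_i − x_j : {i,j} an edge of G} span a subspace of (K^n)* of dimension exactly l. Then any two distinct complete subgraphs of G on l vertices have exactly l − 1 vertices in common. -/
open Module LinearMap Submodule

/-- The defining form `x_i - x_j` (with `i < j`) of the edge `{i, j}`. -/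
noncomputable def edgeFormG (K : Type*) [Field K] (n : ℕ) :
    Sym2 (Fin n) → Module.Dual K (Fin n → K) :=
  Sym2.lift ⟨fun i j =>
    LinearMap.proj (R := K) (φ := fun _ : Fin n => K) (min i j) -
      LinearMap.proj (R := K) (φ := fun _ : Fin n => K) (max i j),
    fun i j => by beta_reduce; rw [min_comm, max_comm]⟩

lemma edgeFormG_single (K : Type*) [Field K] {n : ℕ} (i j w : Fin n) :
    edgeFormG K n s(i, j) (Pi.single w (1:K)) =
      (if min i j = w then 1 else 0) - (if max i j = w then 1 else 0) := by
  simp [edgeFormG, Pi.single_apply]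

lemma indepAux (K : Type*) [Field K] {n : ℕ} (a b : Fin n) (S T : Finset (Fin n))
    (haS : a ∉ S) (haT : a ∉ T) (hbS : b ∉ S) (hbT : b ∉ T) :
    LinearIndependent K (fun v : (S ∪ T : Finset (Fin n)) =>
      edgeFormG K n (if (v : Fin n) ∈ S then s(a, (v : Fin n)) else s(b, (v : Fin n)))) := by
  classical
  rw [Fintype.linearIndependent_iff]
  intro g hg i
  have hiU := i.2
  simp only [Finset.mem_coe, Finset.mem_union] at hiU
  have hai : a ≠ (i : Fin n) := by rintro rfl; rcases hiU with h | h; exacts [haS h, haT h]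
  have hbi : b ≠ (i : Fin n) := by rintro rfl; rcases hiU with h | h; exacts [hbS h, hbT h]
  have h0 : (∑ j, g j • edgeFormG K n
      (if ((j : (S ∪ T : Finset (Fin n))) : Fin n) ∈ S then s(a, (j : Fin n)) else s(b, (j : Fin n))))
      (Pi.single ((i : Fin n)) (1:K)) = 0 := by rw [hg]; rfl
  rw [LinearMap.sum_apply] at h0
  simp only [LinearMap.smul_apply, smul_eq_mul, apply_ite (edgeFormG K n),
    apply_ite (fun φ : Module.Dual K (Fin n → K) => φ (Pi.single ((i : Fin n)) (1:K))),
    edgeFormG_single] at h0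
  rw [Finset.sum_eq_single i] at h0
  · by_cases hiS : (i : Fin n) ∈ S
    · rcases le_total a (i : Fin n) with h | h
      · rw [if_pos hiS, min_eq_left h, max_eq_right h, if_neg hai, if_pos rfl] at h0
        simpa using h0
      · rw [if_pos hiS, min_eq_right h, max_eq_left h, if_pos rfl, if_neg hai] at h0
        simpa using h0
    · rcases le_total b (i : Fin n) with h | h
      · rw [if_neg hiS, min_eq_left h, max_eq_right h, if_neg hbi, if_pos rfl] at h0
        simpa using h0
      · rw [if_neg hiS, min_eq_right h, max_eq_left h, if_pos rfl, if_neg hbi] at h0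
        simpa using h0
  · intro j _ hj
    have hji : (j : Fin n) ≠ (i : Fin n) := fun h => hj (Subtype.ext h)
    by_cases hjS : (j : Fin n) ∈ S
    · rcases min_choice a (j : Fin n) with h | h <;>
        rcases max_choice a (j : Fin n) with h' | h' <;>
          simp [hjS, h, h', hai, hji]
    · rcases min_choice b (j : Fin n) with h | h <;>
        rcases max_choice b (j : Fin n) with h' | h' <;>
          simp [hjS, h, h', hbi, hji]
  · intro h; exact absurd (Finset.mem_univ i) h

lemma cardBound (K : Type*) [Field K] {n l : ℕ} (hl0 : l ≠ 0) (G : SimpleGraph (Fin n))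
    (hdim : Module.finrank K ↥(Submodule.span K (edgeFormG K n '' G.edgeSet)) = l)
    (a b : Fin n) (S T : Finset (Fin n))
    (haS : a ∉ S) (haT : a ∉ T) (hbS : b ∉ S) (hbT : b ∉ T)
    (hmemS : ∀ v ∈ S, G.Adj a v) (hmemT : ∀ v ∈ T, G.Adj b v) :
    (S ∪ T).card ≤ l := by
  classical
  set p := Submodule.span K (edgeFormG K n '' G.edgeSet) with hp
  have hfin : FiniteDimensional K p := by
    by_contra h
    rw [Module.finrank_of_infinite_dimensional h] at hdim
    exact hl0 hdim.symm
  have hmem : ∀ v : (S ∪ T : Finset (Fin n)),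
      edgeFormG K n (if (v : Fin n) ∈ S then s(a, (v : Fin n)) else s(b, (v : Fin n))) ∈ p := by
    intro v
    apply Submodule.subset_span
    refine ⟨_, ?_, rfl⟩
    by_cases hvS : (v : Fin n) ∈ S
    · rw [if_pos hvS]; exact (hmemS _ hvS)
    · rw [if_neg hvS]
      have hv := v.2
      simp only [Finset.mem_coe, Finset.mem_union] at hv
      exact hmemT _ (hv.resolve_left hvS)
  have hindep := indepAux K a b S T haS haT hbS hbT
  have h1 : Submodule.span K (Set.range fun v : (S ∪ T : Finset (Fin n)) =>
      edgeFormG K n (if (v : Fin n) ∈ S then s(a, (v : Fin n)) else s(b, (v : Fin n)))) ≤ p := by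
    rw [Submodule.span_le]
    rintro _ ⟨v, rfl⟩
    exact hmem v
  calc (S ∪ T).card
      = Fintype.card (S ∪ T : Finset (Fin n)) := (Fintype.card_coe _).symm
    _ = Module.finrank K (Submodule.span K (Set.range fun v : (S ∪ T : Finset (Fin n)) =>
          edgeFormG K n (if (v : Fin n) ∈ S then s(a, (v : Fin n)) else s(b, (v : Fin n))))) :=
        (finrank_span_eq_card hindep).symm
    _ ≤ Module.finrank K p := Submodule.finrank_mono h1
    _ = l := hdim

/-- Let `l ≥ 3` and let `G` be a simple graph on `{1,…,n}` whose edge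
forms span a subspace of `(K^n)*` of dimension exactly `l`.  Then any two distinct
complete subgraphs of `G` on `l` vertices have exactly `l - 1` vertices in common. -/
theorem distinct_l_cliques_meet_in_l_sub_one
    (K : Type*) [Field K] {n l : ℕ} (hl : 3 ≤ l) (G : SimpleGraph (Fin n))
    (hdim : Module.finrank K ↥(Submodule.span K (edgeFormG K n '' G.edgeSet)) = l)
    (W₁ W₂ : Finset (Fin n)) (h₁ : G.IsNClique l W₁) (h₂ : G.IsNClique l W₂)
    (hne : W₁ ≠ W₂) :
    (W₁ ∩ W₂).card = l - 1 := by
  classical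
  have hl0 : l ≠ 0 := by omega
  have hW1 : W₁.card = l := h₁.card_eq
  have hW2 : W₂.card = l := h₂.card_eq
  have hcardU : (W₁ ∪ W₂).card + (W₁ ∩ W₂).card = W₁.card + W₂.card :=
    Finset.card_union_add_card_inter _ _
  have hIlt : (W₁ ∩ W₂).card < l := by
    by_contra h
    push_neg at h
    have e1 : W₁ ∩ W₂ = W₁ :=
      Finset.eq_of_subset_of_card_le Finset.inter_subset_left (by omega)
    have e2 : W₁ ∩ W₂ = W₂ :=
      Finset.eq_of_subset_of_card_le Finset.inter_subset_right (by omega)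
    exact hne (e1.symm.trans e2)
  rcases (W₁ ∩ W₂).eq_empty_or_nonempty with hI | ⟨a, ha⟩
  · -- disjoint cliques: contradiction with l ≥ 3
    exfalso
    obtain ⟨a, ha⟩ : W₁.Nonempty := by rw [← Finset.card_pos, hW1]; omega
    obtain ⟨b, hb⟩ : W₂.Nonempty := by rw [← Finset.card_pos, hW2]; omega
    have hdisj : ∀ x, x ∈ W₁ → x ∉ W₂ := by
      intro x hx1 hx2
      have : x ∈ W₁ ∩ W₂ := Finset.mem_inter.mpr ⟨hx1, hx2⟩
      rw [hI] at this
      exact absurd this (Finset.notMem_empty x)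
    have hbd := cardBound K hl0 G hdim a b (W₁.erase a) (W₂.erase b)
      (Finset.notMem_erase a W₁)
      (fun h => hdisj a ha (Finset.erase_subset _ _ h))
      (fun h => hdisj b (Finset.erase_subset _ _ h) hb)
      (Finset.notMem_erase b W₂)
      (fun v hv => h₁.1 ha (Finset.erase_subset _ _ hv) (Finset.ne_of_mem_erase hv).symm)
      (fun v hv => h₂.1 hb (Finset.erase_subset _ _ hv) (Finset.ne_of_mem_erase hv).symm)
    have hdd : Disjoint (W₁.erase a) (W₂.erase b) := by
      rw [Finset.disjoint_left]
      intro x hx hx'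
      exact hdisj x (Finset.erase_subset _ _ hx) (Finset.erase_subset _ _ hx')
    rw [Finset.card_union_of_disjoint hdd, Finset.card_erase_of_mem ha,
      Finset.card_erase_of_mem hb, hW1, hW2] at hbd
    omega
  · -- intersecting case
    rw [Finset.mem_inter] at ha
    obtain ⟨ha1, ha2⟩ := ha
    have haU : a ∈ W₁ ∪ W₂ := Finset.mem_union_left _ ha1
    have hbd := cardBound K hl0 G hdim a a ((W₁ ∪ W₂).erase a) (∅ : Finset (Fin n))
      (Finset.notMem_erase a _) (Finset.notMem_empty a)
      (Finset.notMem_erase a _) (Finset.notMem_empty a)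
      (fun v hv => by
        have hvne : v ≠ a := Finset.ne_of_mem_erase hv
        have hvU : v ∈ W₁ ∪ W₂ := Finset.erase_subset _ _ hv
        rcases Finset.mem_union.mp hvU with h | h
        · exact h₁.1 ha1 h hvne.symm
        · exact h₂.1 ha2 h hvne.symm)
      (fun v hv => absurd hv (Finset.notMem_empty v))
    rw [Finset.union_empty, Finset.card_erase_of_mem haU] at hbd
    have hUpos : 1 ≤ (W₁ ∪ W₂).card := Finset.card_pos.mpr ⟨a, haU⟩
    omega
end
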